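/- Let X → Y → X̃ be a Markov chain of discrete random variables with X, X̃ taking values in a finite set 𝒳, and let 𝒳' ⊆ 𝒳 be the support of X. Let 𝒜ₓ ⊆ 𝒳 be symmetric approximation sets containing x as before, and let p_e = Pr[X̃ ∉ 𝒜_X]. Then p_e·log|𝒳'| + (1−p_e)·sup_{x∈𝒳} log|𝒜ₓ ∩ 𝒳'| + H(p_e) ≥ H(X | Y). -/

import Mathlib

open Finset

open Classical in
noncomputable def prob {Ω : Type*} [Fintype Ω] (μ : Ω → ℝ) (E : Set Ω) : ℝ :=
  ∑ ω, if ω ∈ E then μ ω else 0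

noncomputable def entropy {Ω α : Type*} [Fintype Ω] (μ : Ω → ℝ) (X : Ω → α) : ℝ :=
  -∑ ω, μ ω * Real.logb 2 (prob μ {ω' | X ω' = X ω})

-- Conditional entropy `H(X | Y) = H(X,Y) − H(Y)`.
noncomputable def condEntropy {Ω α β : Type*} [Fintype Ω] (μ : Ω → ℝ)
    (X : Ω → α) (Y : Ω → β) : ℝ :=
  entropy μ (fun ω => (X ω, Y ω)) - entropy μ Y

noncomputable def binEnt (x : ℝ) : ℝ :=
  -(x * Real.logb 2 x) - (1 - x) * Real.logb 2 (1 - x)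

/-!
For a Markov chain `X → Y → Z` and any sub-stochastic kernel `q(x | z)` that is positive on
the sample points, `log t ≤ t - 1` together with `p(x,y,z) p(y) = p(x,y) p(y,z)` gives
`H(X | Y) ≤ E[-log q(X | Z)]`. Take for `q(· | z)` the guess that puts mass `1 - p_e` uniformly on
`𝒜 z ∩ 𝒳'` and `p_e / |𝒳'|` on every other point of `𝒳'`. On the event `X̃ ∈ 𝒜 X` the symmetry
of `𝒜` gives `-log q = log |𝒜 X̃ ∩ 𝒳'| - log (1 - p_e)`, on its complement
`-log q = log |𝒳'| - log p_e`, and averaging over the two events yields the bound.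
-/

open Real

section Prob

variable {Ω : Type*} [Fintype Ω] {μ : Ω → ℝ}

theorem prob_eq_sum_filter (E : Set Ω) [DecidablePred (· ∈ E)] :
    prob μ E = ∑ ω ∈ univ.filter (· ∈ E), μ ω := by
  rw [prob, sum_filter]
  exact sum_congr rfl fun ω _ => by congr

theorem prob_nonneg (hμ0 : ∀ ω, 0 ≤ μ ω) (E : Set Ω) : 0 ≤ prob μ E :=
  sum_nonneg fun ω _ => by split_ifs <;> simp [hμ0 ω]

theorem le_prob_of_mem (hμ0 : ∀ ω, 0 ≤ μ ω) {E : Set Ω} {ω : Ω} (h : ω ∈ E) :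
    μ ω ≤ prob μ E := by
  classical
  rw [prob_eq_sum_filter]
  exact single_le_sum (fun ω _ => hμ0 ω) (mem_filter.2 ⟨mem_univ ω, h⟩)

theorem prob_compl (hμ1 : ∑ ω, μ ω = 1) (E : Set Ω) : prob μ Eᶜ = 1 - prob μ E := by
  rw [eq_sub_iff_add_eq, ← hμ1, prob, prob, ← sum_add_distrib]
  exact sum_congr rfl fun ω _ => by by_cases h : ω ∈ E <;> simp [h]

theorem prob_pos_of_mem (hμ0 : ∀ ω, 0 ≤ μ ω) {E : Set Ω} {ω : Ω} (hμ : 0 < μ ω) (h : ω ∈ E) :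
    0 < prob μ E :=
  hμ.trans_le (le_prob_of_mem hμ0 h)

theorem prob_lt_one_of_notMem (hμ0 : ∀ ω, 0 ≤ μ ω) (hμ1 : ∑ ω, μ ω = 1) {E : Set Ω} {ω : Ω}
    (hμ : 0 < μ ω) (h : ω ∉ E) : prob μ E < 1 := by
  linarith [prob_compl hμ1 E, prob_pos_of_mem hμ0 hμ (Set.mem_compl h)]

theorem prob_le_one (hμ0 : ∀ ω, 0 ≤ μ ω) (hμ1 : ∑ ω, μ ω = 1) (E : Set Ω) : prob μ E ≤ 1 := by
  linarith [prob_compl hμ1 E, prob_nonneg hμ0 Eᶜ]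

theorem sum_mul_comp_eq_sum_image {γ : Type*} [DecidableEq γ] (Z : Ω → γ) (f : γ → ℝ) :
    ∑ ω, μ ω * f (Z ω) = ∑ t ∈ univ.image Z, prob μ {ω | Z ω = t} * f t := by
  classical
  rw [← sum_fiberwise_of_maps_to (fun ω _ => mem_image_of_mem Z (mem_univ ω))]
  refine sum_congr rfl fun t _ => ?_
  rw [prob_eq_sum_filter, sum_mul]
  exact sum_congr (by ext; simp) fun ω hω => by rw [(mem_filter.1 hω).2]

theorem sum_mul_le_of_le_ite (hμ0 : ∀ ω, 0 ≤ μ ω) (hμ1 : ∑ ω, μ ω = 1) (E : Set Ω)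
    [DecidablePred (· ∈ E)]
    {f : Ω → ℝ} {a b : ℝ} (h : ∀ ω, 0 < μ ω → f ω ≤ if ω ∈ E then a else b) :
    ∑ ω, μ ω * f ω ≤ prob μ E * a + (1 - prob μ E) * b := by
  calc ∑ ω, μ ω * f ω ≤ ∑ ω, μ ω * (if ω ∈ E then a else b) := by
        refine sum_le_sum fun ω _ => ?_
        rcases (hμ0 ω).eq_or_lt with h0 | h0
        · simp [← h0]
        · exact mul_le_mul_of_nonneg_left (h ω h0) h0.le
    _ = prob μ E * a + (1 - prob μ E) * b := by
        rw [← prob_compl hμ1, prob, prob, sum_mul, sum_mul, ← sum_add_distrib]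
        exact sum_congr rfl fun ω _ => by by_cases hω : ω ∈ E <;> simp [hω]

theorem condEntropy_eq_sum {α β : Type*} (X : Ω → α) (Y : Ω → β) :
    condEntropy μ X Y = ∑ ω, μ ω * (logb 2 (prob μ {ω' | Y ω' = Y ω})
      - logb 2 (prob μ {ω' | X ω' = X ω ∧ Y ω' = Y ω})) := by
  simp only [condEntropy, entropy, Prod.ext_iff, mul_sub, sum_sub_distrib]
  ring

end Prob

def IsMarkovChain {Ω α β γ : Type*} [Fintype Ω] (μ : Ω → ℝ) (X : Ω → α) (Y : Ω → β)
    (Z : Ω → γ) : Prop :=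
  ∀ x y z, prob μ {ω | X ω = x ∧ Y ω = y ∧ Z ω = z} * prob μ {ω | Y ω = y}
    = prob μ {ω | X ω = x ∧ Y ω = y} * prob μ {ω | Y ω = y ∧ Z ω = z}

theorem logb_two_le_sub_one_div {x : ℝ} (hx : 0 < x) : logb 2 x ≤ (x - 1) / log 2 :=
  div_le_div_of_nonneg_right (log_le_sub_one_of_pos hx) (log_nonneg one_le_two)

namespace IsMarkovChain

variable {Ω α β γ : Type*} [Fintype Ω] {μ : Ω → ℝ}
  {X : Ω → α} {Y : Ω → β} {Z : Ω → γ} {q : α → γ → ℝ}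

theorem prob_mul_div_le (hM : IsMarkovChain μ X Y Z) (hμ0 : ∀ ω, 0 ≤ μ ω) {c : ℝ} (hc : 0 ≤ c)
    (x : α) (y : β) (z : γ) :
    prob μ {ω | X ω = x ∧ Y ω = y ∧ Z ω = z}
        * (prob μ {ω | Y ω = y} * c / prob μ {ω | X ω = x ∧ Y ω = y})
      ≤ prob μ {ω | Y ω = y ∧ Z ω = z} * c := by
  rcases (prob_nonneg hμ0 {ω | X ω = x ∧ Y ω = y}).eq_or_lt with h0 | h0
  · rw [← h0, div_zero, mul_zero]
    exact mul_nonneg (prob_nonneg hμ0 _) hc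
  · rw [← mul_div_assoc, ← mul_assoc, hM x y z, mul_assoc, mul_div_cancel_left₀ _ h0.ne']

theorem sum_mul_div_le_one [Fintype α] (hM : IsMarkovChain μ X Y Z) (hμ0 : ∀ ω, 0 ≤ μ ω)
    (hμ1 : ∑ ω, μ ω = 1) (hq0 : ∀ x z, 0 ≤ q x z) (hq1 : ∀ z, ∑ x, q x z ≤ 1) :
    ∑ ω, μ ω * (prob μ {ω' | Y ω' = Y ω} * q (X ω) (Z ω)
      / prob μ {ω' | X ω' = X ω ∧ Y ω' = Y ω}) ≤ 1 := by
  classical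
  set XYZ : Ω → α × β × γ := fun ω => (X ω, Y ω, Z ω)
  set YZ : Ω → β × γ := fun ω => (Y ω, Z ω)
  have himage : univ.image XYZ ⊆ univ ×ˢ univ.image YZ := fun t ht => by
    obtain ⟨ω, -, rfl⟩ := mem_image.1 ht
    exact mem_product.2 ⟨mem_univ _, mem_image_of_mem _ (mem_univ ω)⟩
  calc _ = ∑ t ∈ univ.image XYZ, prob μ {ω | XYZ ω = t}
          * (prob μ {ω | Y ω = t.2.1} * q t.1 t.2.2 / prob μ {ω | X ω = t.1 ∧ Y ω = t.2.1}) :=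
        sum_mul_comp_eq_sum_image XYZ
          fun t => prob μ {ω | Y ω = t.2.1} * q t.1 t.2.2 / prob μ {ω | X ω = t.1 ∧ Y ω = t.2.1}
    _ ≤ ∑ t ∈ univ.image XYZ, prob μ {ω | YZ ω = t.2} * q t.1 t.2.2 :=
        sum_le_sum fun t _ => by
          simpa only [XYZ, YZ, Prod.ext_iff] using
            hM.prob_mul_div_le hμ0 (hq0 t.1 t.2.2) t.1 t.2.1 t.2.2
    _ ≤ ∑ t ∈ univ ×ˢ univ.image YZ, prob μ {ω | YZ ω = t.2} * q t.1 t.2.2 :=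
        sum_le_sum_of_subset_of_nonneg himage fun t _ _ =>
          mul_nonneg (prob_nonneg hμ0 _) (hq0 _ _)
    _ = ∑ s ∈ univ.image YZ, prob μ {ω | YZ ω = s} * ∑ x, q x s.2 := by
        rw [sum_product, sum_comm]
        simp only [mul_sum]
    _ ≤ ∑ s ∈ univ.image YZ, prob μ {ω | YZ ω = s} * 1 :=
        sum_le_sum fun s _ => mul_le_mul_of_nonneg_left (hq1 s.2) (prob_nonneg hμ0 _)
    _ = ∑ ω, μ ω * 1 := (sum_mul_comp_eq_sum_image YZ fun _ => 1).symm
    _ = 1 := by simp [hμ1]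

theorem condEntropy_le_sum_neg_logb [Fintype α] (hM : IsMarkovChain μ X Y Z)
    (hμ0 : ∀ ω, 0 ≤ μ ω) (hμ1 : ∑ ω, μ ω = 1) (hq0 : ∀ x z, 0 ≤ q x z)
    (hq1 : ∀ z, ∑ x, q x z ≤ 1)
    (hqpos : ∀ ω, 0 < μ ω → 0 < q (X ω) (Z ω)) :
    condEntropy μ X Y ≤ ∑ ω, μ ω * -logb 2 (q (X ω) (Z ω)) := by
  set pY : Ω → ℝ := fun ω => prob μ {ω' | Y ω' = Y ω}
  set pXY : Ω → ℝ := fun ω => prob μ {ω' | X ω' = X ω ∧ Y ω' = Y ω}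
  have hpoint : ∀ ω, μ ω * (logb 2 (pY ω) - logb 2 (pXY ω)) - μ ω * -logb 2 (q (X ω) (Z ω))
      ≤ μ ω * ((pY ω * q (X ω) (Z ω) / pXY ω - 1) / log 2) := by
    intro ω
    rcases (hμ0 ω).eq_or_lt with h0 | h0
    · simp [← h0]
    have hXY : 0 < pXY ω := h0.trans_le (le_prob_of_mem hμ0 ⟨rfl, rfl⟩)
    have hY : 0 < pY ω := h0.trans_le (le_prob_of_mem hμ0 rfl)
    have hq := hqpos ω h0
    rw [← mul_sub]
    refine mul_le_mul_of_nonneg_left ?_ h0.le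
    calc _ = logb 2 (pY ω * q (X ω) (Z ω) / pXY ω) := by
          rw [logb_div (by positivity) hXY.ne', logb_mul hY.ne' hq.ne']
          ring
      _ ≤ _ := logb_two_le_sub_one_div (by positivity)
  rw [condEntropy_eq_sum, ← sub_nonpos, ← sum_sub_distrib]
  calc _ ≤ ∑ ω, μ ω * ((pY ω * q (X ω) (Z ω) / pXY ω - 1) / log 2) :=
        sum_le_sum fun ω _ => hpoint ω
    _ = (∑ ω, μ ω * (pY ω * q (X ω) (Z ω) / pXY ω) - ∑ ω, μ ω) / log 2 := by
        rw [sub_div, sum_div, sum_div, ← sum_sub_distrib]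
        exact sum_congr rfl fun ω _ => by ring
    _ ≤ 0 := div_nonpos_of_nonpos_of_nonneg
        (by linarith [hM.sum_mul_div_le_one hμ0 hμ1 hq0 hq1]) (log_nonneg one_le_two)

end IsMarkovChain

theorem natCast_mul_div_le {k n : ℕ} {a : ℝ} (hkn : k ≤ n) (ha : 0 ≤ a) :
    (k : ℝ) * (a / n) ≤ a := by
  rw [mul_div_left_comm]
  exact mul_le_of_le_one_right ha (div_le_one_of_le₀ (by exact_mod_cast hkn) (Nat.cast_nonneg _))

section FanoKernel

variable {α : Type*} [DecidableEq α] (S : Finset α) (A : α → Finset α) (p : ℝ) {x z : α}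

noncomputable def fanoKernel (x z : α) : ℝ :=
  if x ∈ S then if x ∈ A z then (1 - p) / #(A z ∩ S) else p / #S else 0

theorem fanoKernel_nonneg (hp0 : 0 ≤ p) (hp1 : p ≤ 1) (x z : α) : 0 ≤ fanoKernel S A p x z := by
  unfold fanoKernel
  split_ifs
  exacts [div_nonneg (by linarith) (Nat.cast_nonneg _), div_nonneg hp0 (Nat.cast_nonneg _), le_rfl]

theorem fanoKernel_sum_le_one [Fintype α] (hp0 : 0 ≤ p) (hp1 : p ≤ 1) (z : α) :
    ∑ x, fanoKernel S A p x z ≤ 1 := by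
  simp only [fanoKernel]
  rw [sum_ite_mem, univ_inter, sum_ite, sum_const, sum_const, nsmul_eq_mul, nsmul_eq_mul,
    filter_mem_eq_inter, inter_comm]
  linarith [natCast_mul_div_le le_rfl (sub_nonneg.2 hp1) (n := #(A z ∩ S)),
    natCast_mul_div_le (card_filter_le S fun x => x ∉ A z) hp0]

theorem fanoKernel_pos_of_mem (hx : x ∈ S) (hxz : x ∈ A z) (hp : p < 1) :
    0 < fanoKernel S A p x z := by
  have : 0 < #(A z ∩ S) := card_pos.2 ⟨x, mem_inter.2 ⟨hxz, hx⟩⟩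
  simp only [fanoKernel, hx, hxz, if_true]
  exact div_pos (sub_pos.2 hp) (by exact_mod_cast this)

theorem fanoKernel_pos_of_notMem (hx : x ∈ S) (hxz : x ∉ A z) (hp : 0 < p) :
    0 < fanoKernel S A p x z := by
  have : 0 < #S := card_pos.2 ⟨x, hx⟩
  simp only [fanoKernel, hx, hxz, if_true, if_false]
  exact div_pos hp (by exact_mod_cast this)

theorem neg_logb_fanoKernel_of_mem (hx : x ∈ S) (hxz : x ∈ A z) (hp : p < 1) :
    -logb 2 (fanoKernel S A p x z) = logb 2 #(A z ∩ S) - logb 2 (1 - p) := by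
  have : 0 < #(A z ∩ S) := card_pos.2 ⟨x, mem_inter.2 ⟨hxz, hx⟩⟩
  simp only [fanoKernel, hx, hxz, if_true]
  rw [logb_div (sub_pos.2 hp).ne' (by exact_mod_cast this.ne'), neg_sub]

theorem neg_logb_fanoKernel_of_notMem (hx : x ∈ S) (hxz : x ∉ A z) (hp : 0 < p) :
    -logb 2 (fanoKernel S A p x z) = logb 2 #S - logb 2 p := by
  have : 0 < #S := card_pos.2 ⟨x, hx⟩
  simp only [fanoKernel, hx, hxz, if_true, if_false]
  rw [logb_div hp.ne' (by exact_mod_cast this.ne'), neg_sub]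

end FanoKernel

open Classical in
theorem generalized_fano_support_general
    {Ω 𝒳 β : Type*} [Fintype Ω] [Fintype 𝒳]
    (μ : Ω → ℝ) (hμ0 : ∀ ω, 0 ≤ μ ω) (hμ1 : ∑ ω, μ ω = 1)
    (X : Ω → 𝒳) (Y : Ω → β) (Xt : Ω → 𝒳)
    (hMarkov : ∀ (x : 𝒳) (y : β) (z : 𝒳),
      prob μ {ω | X ω = x ∧ Y ω = y ∧ Xt ω = z} * prob μ {ω | Y ω = y}
        = prob μ {ω | X ω = x ∧ Y ω = y} * prob μ {ω | Y ω = y ∧ Xt ω = z})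
    (𝒜 : 𝒳 → Finset 𝒳)
    (hsym : ∀ x x', x' ∈ 𝒜 x ↔ x ∈ 𝒜 x')
    (pe : ℝ) (hpe : pe = prob μ {ω | Xt ω ∉ 𝒜 (X ω)}) :
    condEntropy μ X Y ≤
      pe * Real.logb 2
          ((Finset.univ.filter (fun x : 𝒳 => 0 < prob μ {ω | X ω = x})).card)
        + (1 - pe) * (⨆ x : 𝒳, Real.logb 2
            ((𝒜 x ∩ Finset.univ.filter (fun x' : 𝒳 => 0 < prob μ {ω | X ω = x'})).card))
        + binEnt pe := by
  subst hpe
  set S := univ.filter fun x : 𝒳 => 0 < prob μ {ω | X ω = x}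
  set E : Set Ω := {ω | Xt ω ∉ 𝒜 (X ω)}
  have hS : ∀ ω, 0 < μ ω → X ω ∈ S := fun ω h =>
    mem_filter.2 ⟨mem_univ _, prob_pos_of_mem hμ0 h rfl⟩
  have hnotMem : ∀ ω, ω ∈ E → X ω ∉ 𝒜 (Xt ω) := fun ω hω => mt (hsym _ _).2 hω
  have hmem : ∀ ω, ω ∉ E → X ω ∈ 𝒜 (Xt ω) := fun ω hω => (hsym _ _).1 (not_not.1 hω)
  have hpe0 := prob_nonneg hμ0 E
  have hpe1 := prob_le_one hμ0 hμ1 E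
  have hcross := IsMarkovChain.condEntropy_le_sum_neg_logb hMarkov hμ0 hμ1
    (fanoKernel_nonneg S 𝒜 _ hpe0 hpe1) (fanoKernel_sum_le_one S 𝒜 _ hpe0 hpe1) fun ω h => by
      by_cases hω : ω ∈ E
      · exact fanoKernel_pos_of_notMem _ _ _ (hS ω h) (hnotMem ω hω) (prob_pos_of_mem hμ0 h hω)
      · exact fanoKernel_pos_of_mem _ _ _ (hS ω h) (hmem ω hω)
          (prob_lt_one_of_notMem hμ0 hμ1 h hω)
  have hsplit := sum_mul_le_of_le_ite hμ0 hμ1 E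
    (f := fun ω => -logb 2 (fanoKernel S 𝒜 (prob μ E) (X ω) (Xt ω)))
    (a := logb 2 #S - logb 2 (prob μ E))
    (b := (⨆ x, logb 2 #(𝒜 x ∩ S)) - logb 2 (1 - prob μ E))
    fun ω h => by
      split_ifs with hω
      · exact (neg_logb_fanoKernel_of_notMem _ _ _ (hS ω h) (hnotMem ω hω)
          (prob_pos_of_mem hμ0 h hω)).le
      · rw [neg_logb_fanoKernel_of_mem _ _ _ (hS ω h) (hmem ω hω)
          (prob_lt_one_of_notMem hμ0 hμ1 h hω)]
        exact sub_le_sub_right (le_ciSup (Finite.bddAbove_range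
          fun x => logb 2 #(𝒜 x ∩ S)) (Xt ω)) _
  calc condEntropy μ X Y ≤ _ := hcross
    _ ≤ _ := hsplit
    _ = _ := by unfold binEnt; ring

open Classical in
theorem generalized_fano_support
    {Ω 𝒳 β : Type*} [Fintype Ω] [Fintype 𝒳] [Nonempty 𝒳]
    (μ : Ω → ℝ) (hμ0 : ∀ ω, 0 ≤ μ ω) (hμ1 : ∑ ω, μ ω = 1)
    (X : Ω → 𝒳) (Y : Ω → β) (Xt : Ω → 𝒳)
    (hMarkov : ∀ (x : 𝒳) (y : β) (z : 𝒳),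
      prob μ {ω | X ω = x ∧ Y ω = y ∧ Xt ω = z} * prob μ {ω | Y ω = y}
        = prob μ {ω | X ω = x ∧ Y ω = y} * prob μ {ω | Y ω = y ∧ Xt ω = z})
    (𝒜 : 𝒳 → Finset 𝒳) (hmem : ∀ x, x ∈ 𝒜 x)
    (hsym : ∀ x x', x' ∈ 𝒜 x ↔ x ∈ 𝒜 x')
    (pe : ℝ) (hpe : pe = prob μ {ω | Xt ω ∉ 𝒜 (X ω)}) :
    condEntropy μ X Y ≤
      pe * Real.logb 2
          ((Finset.univ.filter (fun x : 𝒳 => 0 < prob μ {ω | X ω = x})).card)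
        + (1 - pe) * (⨆ x : 𝒳, Real.logb 2
            ((𝒜 x ∩ Finset.univ.filter (fun x' : 𝒳 => 0 < prob μ {ω | X ω = x'})).card))
        + binEnt pe :=
  generalized_fano_support_general μ hμ0 hμ1 X Y Xt hMarkov 𝒜 hsym pe hpe
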